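/- arXiv:1703.04603 — 3 statements merged into one kernel-verified Lean document; each statement's English description precedes it below -/
import Mathlib

section
/- Let τ = α · a · β · γ be a sequence and →hb a relation on its positions. Assume the dichotomy property: whenever x precedes y with no hb-through chain from x to y through the part between them, y can be moved before x preserving per-thread projections and the relation structure. Then there exists a rearrangement τ' = α · β' · a · β'' · γ with β'' a subsequence of β, the same per-thread projections as τ, and such that every action b in β'' satisfies a →hb⁺ b through the intermediate actions. -/
/-- Projection of a sequence of actions to the actions of thread `t`. -/
def projT {A T : Type*} [DecidableEq T] (thread : A → T) (t : T) (l : List A) :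
    List A :=
  l.filter (fun x => thread x = t)

/-- There is a happens-before-through chain from `a` to `b` through the
subword `σ`. -/
def hbThrough {A : Type*} (hb : A → A → Prop) (a : A) (σ : List A) (b : A) :
    Prop :=
  ∃ l : List A, l.Sublist σ ∧ List.Chain hb a (l ++ [b])

theorem dependence_aux {A T : Type*} [DecidableEq T]
    (thread : A → T) (hb : A → A → Prop) (γ : List A)
    (hdich : ∀ (l₁ l₂ l₃ : List A) (x y : A), ¬ hbThrough hb x l₂ y →
      ∃ l₂₁ l₂₂ : List A, l₂₂.Sublist l₂ ∧
        ∀ t : T, projT thread t (l₁ ++ l₂₁ ++ y :: x :: l₂₂ ++ l₃) =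
          projT thread t (l₁ ++ x :: l₂ ++ y :: l₃)) :
    ∀ (n : ℕ) (β : List A), β.length ≤ n → ∀ (α : List A) (a : A),
    ∃ β' β'' : List A, β''.Sublist β ∧
      (∀ t : T, projT thread t (α ++ β' ++ a :: β'' ++ γ) =
        projT thread t (α ++ a :: β ++ γ)) ∧
      ∀ (δ₁ : List A) (b : A) (δ₂ : List A), β'' = δ₁ ++ b :: δ₂ →
        hbThrough hb a δ₁ b := by
  intro n
  induction n with
  | zero =>
    intro β hβ α a
    have : β = [] := List.length_eq_zero_iff.mp (Nat.le_zero.mp hβ)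
    subst this
    refine ⟨[], [], List.Sublist.refl _, fun t => by simp, ?_⟩
    intro δ₁ b δ₂ h
    exact absurd h (by simp)
  | succ n ih =>
    intro β hβ α a
    by_cases h : ∀ (δ₁ : List A) (b : A) (δ₂ : List A), β = δ₁ ++ b :: δ₂ →
        hbThrough hb a δ₁ b
    · exact ⟨[], β, List.Sublist.refl _, fun t => by simp, h⟩
    · push_neg at h
      obtain ⟨δ₁, b, δ₂, hβeq, hnot⟩ := h
      obtain ⟨l₂₁, l₂₂, hsub, hproj⟩ := hdich α δ₁ (δ₂ ++ γ) a b hnot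
      have hlen : (l₂₂ ++ δ₂).length ≤ n := by
        have h1 : l₂₂.length ≤ δ₁.length := hsub.length_le
        have h2 : β.length = δ₁.length + δ₂.length + 1 := by
          subst hβeq; simp [List.length_append]; omega
        simp [List.length_append]
        omega
      obtain ⟨β', β'', hsub', hproj', hchain⟩ :=
        ih (l₂₂ ++ δ₂) hlen (α ++ l₂₁ ++ [b]) a
      refine ⟨l₂₁ ++ b :: β', β'', ?_, ?_, hchain⟩
      · refine hsub'.trans ?_
        have : (l₂₂ ++ δ₂).Sublist (δ₁ ++ δ₂) :=
          hsub.append (List.Sublist.refl _)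
        refine this.trans ?_
        subst hβeq
        exact (List.Sublist.refl δ₁).append (List.sublist_cons_self b δ₂)
      · intro t
        have e1 : α ++ (l₂₁ ++ b :: β') ++ a :: β'' ++ γ
            = (α ++ l₂₁ ++ [b]) ++ β' ++ a :: β'' ++ γ := by simp
        have e2 : (α ++ l₂₁ ++ [b]) ++ a :: (l₂₂ ++ δ₂) ++ γ
            = α ++ l₂₁ ++ b :: a :: l₂₂ ++ (δ₂ ++ γ) := by simp
        have e3 : α ++ a :: δ₁ ++ b :: (δ₂ ++ γ) = α ++ a :: β ++ γ := by
          subst hβeq; simp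
        rw [e1, hproj' t, e2, hproj t, e3]

/-- Lemma 5 (Dependence). Assume the dichotomy property: whenever `x` precedes
`y` with no hb-through chain from `x` to `y` through the part between them,
`y` can be moved before `x` preserving per-thread projections (with the part
between shrinking to a subsequence). Then for `τ = α · a · β · γ` there is a
rearrangement `τ' = α · β' · a · β'' · γ` with `β''` a subsequence of `β`,
the same per-thread projections as `τ`, and such that every action `b` in
`β''` satisfies `a →hb⁺ b` through the intermediate actions. -/
theorem dependence_normalization {A T : Type*} [DecidableEq T]
    (thread : A → T) (hb : A → A → Prop) (α β γ : List A) (a : A)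
    (hdich : ∀ (l₁ l₂ l₃ : List A) (x y : A), ¬ hbThrough hb x l₂ y →
      ∃ l₂₁ l₂₂ : List A, l₂₂.Sublist l₂ ∧
        ∀ t : T, projT thread t (l₁ ++ l₂₁ ++ y :: x :: l₂₂ ++ l₃) =
          projT thread t (l₁ ++ x :: l₂ ++ y :: l₃)) :
    ∃ β' β'' : List A, β''.Sublist β ∧
      (∀ t : T, projT thread t (α ++ β' ++ a :: β'' ++ γ) =
        projT thread t (α ++ a :: β ++ γ)) ∧
      ∀ (δ₁ : List A) (b : A) (δ₂ : List A), β'' = δ₁ ++ b :: δ₂ →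
        hbThrough hb a δ₁ b := by
  exact dependence_aux thread hb γ hdich β.length β le_rfl α a
end

section
/- Derivation of singularity from the witness normal form and the Two Stores proposition: if a program has no fence instructions and is not robust, then any minimal violation in witness form τ₁ · isu_st · τ₂ · a · τ₃ · st · τ₄, where τ₄ consists only of delayed stores of the attacker thread (respecting program order), must have τ₄ = ε; hence exactly one store (namely st) is delayed. -/
/-- Abstract presentation of a concurrent program running under a
store-atomic consistency model: relaxed and SC computations, happens-before
traces, the cost triple of a computation, which positions are delayed stores,
and whether the program uses lightweight fence instructions. -/
structure StoreAtomicProgram where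
  /-- actions -/
  Action : Type
  /-- thread identifiers -/
  Thread : Type
  /-- the thread executing an action -/
  thread : Action → Thread
  /-- computations under the relaxed (store-atomic, buffered) semantics -/
  comp : Set (List Action)
  /-- computations under sequential consistency -/
  scComp : Set (List Action)
  /-- happens-before traces -/
  Trace : Type
  /-- the happens-before trace of a computation -/
  trace : List Action → Trace
  /-- the cost triple `(delays, reorders, length)` of a computation -/
  cost : List Action → ℕ × ℕ × ℕ
  /-- position `p` of computation `τ` is a delayed store arriving at memory -/
  isDelayedStore : List Action → ℕ → Prop
  /-- whether the program contains lightweight `fence` instructions -/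
  usesFence : Prop

/-- A violating computation. -/
def Violation (P : StoreAtomicProgram) (τ : List P.Action) : Prop :=
  τ ∈ P.comp ∧ ∀ σ ∈ P.scComp, P.trace σ ≠ P.trace τ

/-- Lexicographic comparison of cost triples. -/
def CostLt : ℕ × ℕ × ℕ → ℕ × ℕ × ℕ → Prop :=
  Prod.Lex (· < ·) (Prod.Lex (· < ·) (· < ·))

/-- A minimal violation. -/
def MinimalViolation (P : StoreAtomicProgram) (τ : List P.Action) : Prop :=
  Violation P τ ∧ ∀ σ : List P.Action, Violation P σ → ¬ CostLt (P.cost σ) (P.cost τ)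

/-- Derivation of singularity from the witness normal form and the Two Stores
proposition: in a fence-free program, a minimal violation in witness form
`τ₁ · isu_st · τ₂ · a · τ₃ · st · τ₄`, where `st · τ₄` consists only of
delayed stores of the attacker thread `tA` respecting program order `po` and
all delayed stores lie in `st · τ₄`, must have `τ₄ = ε`; hence exactly one
store (namely `st`) is delayed. -/
theorem witness_tail_empty (P : StoreAtomicProgram)
    (po : P.Action → P.Action → Prop)
    (hNoFence : ¬ P.usesFence)
    (τ₁ τ₂ τ₃ τ₄ : List P.Action) (isuSt a st : P.Action) (tA : P.Thread)
    (τ : List P.Action)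
    (hτ : τ = τ₁ ++ isuSt :: τ₂ ++ a :: τ₃ ++ st :: τ₄)
    (hmin : MinimalViolation P τ)
    -- every element of `st :: τ₄` is a delayed store of the attacker thread
    (hTail : ∀ i (hi : i < (st :: τ₄).length),
      P.thread ((st :: τ₄).get ⟨i, hi⟩) = tA ∧
      P.isDelayedStore τ ((τ₁ ++ isuSt :: τ₂ ++ a :: τ₃).length + i))
    -- the tail respects program order
    (hpo : List.Pairwise po (st :: τ₄))
    -- all delayed stores of the witness lie in the tail `st :: τ₄`
    (hOnly : ∀ p : ℕ, P.isDelayedStore τ p →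
      (τ₁ ++ isuSt :: τ₂ ++ a :: τ₃).length ≤ p ∧ p < τ.length)
    -- the Two Stores proposition
    (hTwoStores : ∀ (σ₁ σ₂ : List P.Action) (s₁ s₂ : P.Action),
      MinimalViolation P (σ₁ ++ s₁ :: s₂ :: σ₂) →
      P.thread s₁ = P.thread s₂ →
      P.isDelayedStore (σ₁ ++ s₁ :: s₂ :: σ₂) σ₁.length →
      P.isDelayedStore (σ₁ ++ s₁ :: s₂ :: σ₂) (σ₁.length + 1) → False) :
    τ₄ = [] ∧
      ∀ p : ℕ, P.isDelayedStore τ p →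
        p = (τ₁ ++ isuSt :: τ₂ ++ a :: τ₃).length := by

  set σ₁ := τ₁ ++ isuSt :: τ₂ ++ a :: τ₃ with hσ₁
  have hτ' : τ = σ₁ ++ st :: τ₄ := by simp [hτ, hσ₁]
  have h4 : τ₄ = [] := by
    cases τ₄ with
    | nil => rfl
    | cons b rest =>
      exfalso
      have h0 := hTail 0 (by simp)
      have h1 := hTail 1 (by simp)
      simp only [List.get] at h0 h1
      apply hTwoStores σ₁ rest st b
      · rw [← hτ']; exact hmin
      · rw [h0.1, h1.1]
      · rw [← hτ']; exact h0.2
      · rw [← hτ']; exact h1.2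
  subst h4
  refine ⟨rfl, fun p hp => ?_⟩
  have h := hOnly p hp
  have hlen : τ.length = σ₁.length + 1 := by simp [hτ']
  omega
end

section
/- FIFO order preservation: in the operational semantics with per-address and all-addresses FIFO buffers, two stores of the same thread to the same address reach memory in the order they were issued; likewise a store or fence cannot reach memory before an earlier-issued fence of the same thread whose address list covers it. -/
/-- Actions of the store-atomic operational semantics. Issue actions are
annotated with their payload so that issues can be matched with the
corresponding memory actions. -/
inductive Act (Thread Dom : Type) : Type
  | isuStore (t : Thread) (a v : Dom)   -- issue of a store of value `v` to `a`
  | isuFence (t : Thread) (L : List Dom) -- issue of a fence over addresses `L`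
  | store (t : Thread) (a v : Dom)      -- a store hitting the global memory
  | load (t : Thread) (a v : Dom)       -- a load of value `v` from `a`
  | fence (t : Thread) (L : List Dom)   -- a fence leaving the buffer
  | scfence (t : Thread)
  | loc (t : Thread)

/-- Entries of the all-addresses FIFO buffer: buffered stores and fences. -/
inductive BufEntry (Dom : Type) : Type
  | st (a v : Dom)
  | fence (L : List Dom)

/-- Configurations: global memory, per-thread per-address FIFO buffers, and
per-thread all-addresses FIFO buffers. -/
structure Cfg (Thread Dom : Type) : Type where
  mem : Dom → Dom
  buf1 : Thread → Dom → List Dom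
  buf2 : Thread → List (BufEntry Dom)

/-- The value of the most recent buffered store to `a` in an all-addresses
buffer, if any (used for early reads). -/
def lastStoreVal {Dom : Type} [DecidableEq Dom] (l : List (BufEntry Dom))
    (a : Dom) : Option Dom :=
  l.foldl (fun acc e => match e with
    | BufEntry.st a' v => if a' = a then some v else acc
    | BufEntry.fence _ => acc) none

variable {Thread Dom : Type}

/-- One step of the store-atomic operational semantics, labeled by the list
of emitted actions (`[]` for the silent buffer-advance step). -/
inductive Step [DecidableEq Thread] [DecidableEq Dom] :
    Cfg Thread Dom → List (Act Thread Dom) → Cfg Thread Dom → Prop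
  | isuStore (c : Cfg Thread Dom) (t : Thread) (a v : Dom) :
      Step c [Act.isuStore t a v]
        { c with buf1 := fun t' a' =>
            if t' = t ∧ a' = a then c.buf1 t a ++ [v] else c.buf1 t' a' }
  | advance (c : Cfg Thread Dom) (t : Thread) (a v : Dom) (β : List Dom)
      (h : c.buf1 t a = v :: β) :
      Step c []
        { c with
          buf1 := fun t' a' => if t' = t ∧ a' = a then β else c.buf1 t' a',
          buf2 := fun t' =>
            if t' = t then c.buf2 t ++ [BufEntry.st a v] else c.buf2 t' }
  | storeMem (c : Cfg Thread Dom) (t : Thread) (a v : Dom)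
      (β : List (BufEntry Dom)) (h : c.buf2 t = BufEntry.st a v :: β) :
      Step c [Act.store t a v]
        { c with
          mem := fun a' => if a' = a then v else c.mem a',
          buf2 := fun t' => if t' = t then β else c.buf2 t' }
  | isuFence (c : Cfg Thread Dom) (t : Thread) (L : List Dom)
      (h : ∀ a ∈ L, c.buf1 t a = []) :
      Step c [Act.isuFence t L]
        { c with buf2 := fun t' =>
            if t' = t then c.buf2 t ++ [BufEntry.fence L] else c.buf2 t' }
  | fenceMem (c : Cfg Thread Dom) (t : Thread) (L : List Dom)
      (β : List (BufEntry Dom)) (h : c.buf2 t = BufEntry.fence L :: β) :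
      Step c [Act.fence t L]
        { c with buf2 := fun t' => if t' = t then β else c.buf2 t' }
  | scfence (c : Cfg Thread Dom) (t : Thread)
      (h2 : c.buf2 t = []) (h1 : ∀ a : Dom, c.buf1 t a = []) :
      Step c [Act.scfence t] c
  | earlyRead1 (c : Cfg Thread Dom) (t : Thread) (a v : Dom) (β : List Dom)
      (h : c.buf1 t a = β ++ [v]) :
      Step c [Act.load t a v] c
  | earlyRead2 (c : Cfg Thread Dom) (t : Thread) (a v : Dom)
      (h1 : c.buf1 t a = []) (h2 : lastStoreVal (c.buf2 t) a = some v) :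
      Step c [Act.load t a v] c
  | readMem (c : Cfg Thread Dom) (t : Thread) (a : Dom)
      (h1 : c.buf1 t a = []) (h2 : lastStoreVal (c.buf2 t) a = none) :
      Step c [Act.load t a (c.mem a)] c
  | localAct (c : Cfg Thread Dom) (t : Thread) :
      Step c [Act.loc t] c

/-- Multi-step execution, collecting the emitted actions. -/
inductive Exec [DecidableEq Thread] [DecidableEq Dom] :
    Cfg Thread Dom → List (Act Thread Dom) → Cfg Thread Dom → Prop
  | refl (c : Cfg Thread Dom) : Exec c [] c
  | step {c c' c'' : Cfg Thread Dom} {l τ : List (Act Thread Dom)}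
      (h : Step c l c') (h' : Exec c' τ c'') : Exec c (l ++ τ) c''

/-- All buffers of a configuration are empty. -/
def emptyBufs (c : Cfg Thread Dom) : Prop :=
  (∀ t a, c.buf1 t a = []) ∧ ∀ t, c.buf2 t = []

/-- The subsequence of issue events of thread `t` concerning address `a`:
issued stores to `a` and issued fences whose address list contains `a`. -/
def issueEvents [DecidableEq Thread] [DecidableEq Dom] (t : Thread) (a : Dom) :
    Act Thread Dom → Option (BufEntry Dom)
  | Act.isuStore t' a' v => if t' = t ∧ a' = a then some (BufEntry.st a' v) else none
  | Act.isuFence t' L => if t' = t ∧ a ∈ L then some (BufEntry.fence L) else none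
  | _ => none

/-- The subsequence of memory events of thread `t` concerning address `a`:
stores to `a` hitting memory and executed fences whose address list contains
`a`. -/
def memEvents [DecidableEq Thread] [DecidableEq Dom] (t : Thread) (a : Dom) :
    Act Thread Dom → Option (BufEntry Dom)
  | Act.store t' a' v => if t' = t ∧ a' = a then some (BufEntry.st a' v) else none
  | Act.fence t' L => if t' = t ∧ a ∈ L then some (BufEntry.fence L) else none
  | _ => none


/-- Pending entries concerning thread `t` and address `a`. -/
def Pend [DecidableEq Dom] (t : Thread) (a : Dom) (c : Cfg Thread Dom) :
    List (BufEntry Dom) :=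
  (c.buf2 t).filterMap (fun e => match e with
    | BufEntry.st a' v => if a' = a then some (BufEntry.st a' v) else none
    | BufEntry.fence L => if a ∈ L then some (BufEntry.fence L) else none)
  ++ (c.buf1 t a).map (BufEntry.st a)

lemma step_inv [DecidableEq Thread] [DecidableEq Dom]
    {c c' : Cfg Thread Dom} {l : List (Act Thread Dom)}
    (h : Step c l c') (t : Thread) (a : Dom) :
    l.filterMap (memEvents t a) ++ Pend t a c' =
      Pend t a c ++ l.filterMap (issueEvents t a) := by
  cases h with
  | isuStore t' a' v =>
      by_cases hc : t' = t ∧ a' = a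
      · obtain ⟨rfl, rfl⟩ := hc
        simp [Pend, memEvents, issueEvents]
      · have h2 : ¬(t = t' ∧ a = a') := fun h => hc ⟨h.1.symm, h.2.symm⟩
        simp [Pend, memEvents, issueEvents, hc, h2]
  | advance t' a' v β hb =>
      by_cases ht : t' = t
      · subst ht
        by_cases ha : a' = a
        · subst ha
          simp [Pend, memEvents, issueEvents, List.filterMap_append, hb]
        · have ha' : ¬(a = a') := fun h => ha h.symm
          simp [Pend, memEvents, issueEvents, List.filterMap_append, ha, ha']
      · have ht' : ¬(t = t') := fun h => ht h.symm
        simp [Pend, memEvents, issueEvents, ht']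
  | storeMem t' a' v β hb =>
      by_cases hc : t' = t ∧ a' = a
      · obtain ⟨rfl, rfl⟩ := hc
        simp [Pend, memEvents, issueEvents, hb]
      · by_cases ht : t' = t
        · subst ht
          have ha : ¬(a' = a) := fun h => hc ⟨rfl, h⟩
          simp [Pend, memEvents, issueEvents, hb, ha, hc]
        · have ht' : ¬(t = t') := fun h => ht h.symm
          simp [Pend, memEvents, issueEvents, hc, ht']
  | isuFence t' L hL =>
      by_cases ht : t' = t
      · subst ht
        by_cases ha : a ∈ L
        · simp [Pend, memEvents, issueEvents, List.filterMap_append, ha, hL a ha]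
        · simp [Pend, memEvents, issueEvents, List.filterMap_append, ha]
      · have ht' : ¬(t = t') := fun h => ht h.symm
        have hc : ¬(t' = t ∧ a ∈ L) := fun h => ht h.1
        simp [Pend, memEvents, issueEvents, ht', hc]
  | fenceMem t' L β hb =>
      by_cases ht : t' = t
      · subst ht
        by_cases ha : a ∈ L
        · simp [Pend, memEvents, issueEvents, hb, ha]
        · simp [Pend, memEvents, issueEvents, hb, ha]
      · have ht' : ¬(t = t') := fun h => ht h.symm
        have hc : ¬(t' = t ∧ a ∈ L) := fun h => ht h.1
        simp [Pend, memEvents, issueEvents, ht', hc]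
  | scfence t' h2 h1 => exact (List.append_nil _).symm
  | earlyRead1 t' a' v β hb => exact (List.append_nil _).symm
  | earlyRead2 t' a' v h1 h2 => exact (List.append_nil _).symm
  | readMem t' a' h1 h2 => exact (List.append_nil _).symm
  | localAct t' => exact (List.append_nil _).symm

lemma exec_inv [DecidableEq Thread] [DecidableEq Dom]
    {c c' : Cfg Thread Dom} {τ : List (Act Thread Dom)}
    (h : Exec c τ c') (t : Thread) (a : Dom) :
    τ.filterMap (memEvents t a) ++ Pend t a c' =
      Pend t a c ++ τ.filterMap (issueEvents t a) := by
  induction h with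
  | refl c => simp
  | step hs he ih =>
      rename_i c c' c'' l τ
      have h1 := step_inv hs t a
      calc (l ++ τ).filterMap (memEvents t a) ++ Pend t a c''
          = l.filterMap (memEvents t a) ++ (τ.filterMap (memEvents t a) ++ Pend t a c'') := by
            simp [List.filterMap_append]
        _ = l.filterMap (memEvents t a) ++ (Pend t a c' ++ τ.filterMap (issueEvents t a)) := by
            rw [ih]
        _ = (l.filterMap (memEvents t a) ++ Pend t a c') ++ τ.filterMap (issueEvents t a) := by
            simp
        _ = Pend t a c ++ (l ++ τ).filterMap (issueEvents t a) := by
            rw [h1]; simp [List.filterMap_append]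

/-- FIFO order preservation: in any complete computation of the store-atomic
semantics (starting and ending with empty buffers), for every thread `t` and
address `a`, the sequence of memory events concerning `a` (stores of `t` to
`a` and fences of `t` covering `a`) equals the sequence of the corresponding
issue events. In particular, two stores of the same thread to the same
address reach memory in the order they were issued, and a store or fence
cannot reach memory before an earlier-issued fence of the same thread whose
address list covers it. -/
theorem fifo_order_preservation [DecidableEq Thread] [DecidableEq Dom]
    (c₀ c₁ : Cfg Thread Dom) (τ : List (Act Thread Dom))
    (h₀ : emptyBufs c₀) (h₁ : emptyBufs c₁)
    (hexec : Exec c₀ τ c₁) (t : Thread) (a : Dom) :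
    τ.filterMap (memEvents t a) = τ.filterMap (issueEvents t a) := by
  have h := exec_inv hexec t a
  have p0 : Pend t a c₀ = [] := by simp [Pend, h₀.1, h₀.2]
  have p1 : Pend t a c₁ = [] := by simp [Pend, h₁.1, h₁.2]
  rw [p0, p1] at h
  simpa using h
end
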